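/- arXiv:0908.1631 — 3 statements merged into one kernel-verified Lean document; each statement's English description precedes it below -/
import Mathlib

section
/- The weak torsion of the nonlinear connection induced by the semispray S vanishes: the Frölicher–Nijenhuis bracket [J,h] = 0, i.e., for all smooth vector fields X, Y on E: [JX,hY] + [hX,JY] + (J∘h + h∘J)([X,Y]) − J([X,hY]) − J([hX,Y]) − h([X,JY]) − h([JX,Y]) = 0. -/
noncomputable section

/-- The local model `E = ℝ × (Fin n → ℝ) × (Fin n → ℝ)` of the first jet bundle `J¹π`,
with coordinates `(t, xⁱ, yⁱ)`.  Tangent vectors at a point are identified with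
elements of `E n` itself. -/
abbrev E (n : ℕ) : Type := ℝ × (Fin n → ℝ) × (Fin n → ℝ)

variable {n : ℕ}

/-- A map between normed spaces is `C^∞`-smooth. -/
def Cinf {α β : Type*} [NormedAddCommGroup α] [NormedSpace ℝ α]
    [NormedAddCommGroup β] [NormedSpace ℝ β] (f : α → β) : Prop :=
  ContDiff ℝ (⊤ : ℕ∞) f

/-- A tangent vector having only a `y`-component. -/
def ypart (w : Fin n → ℝ) : E n := (0, 0, w)

/-- The coordinate vector `∂/∂yⁱ`. -/
def pdy (i : Fin n) : E n := ypart (Pi.single i 1)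

/-- The coordinate vector `∂/∂xⁱ`. -/
def pdx (i : Fin n) : E n := (0, Pi.single i 1, 0)

/-- Action of a vector field `X` on a function `f`: `X(f)(p) = df_p(X(p))`. -/
def vfd (X : E n → E n) (f : E n → ℝ) : E n → ℝ := fun p => fderiv ℝ f p (X p)

/-- Lie bracket of vector fields on `E n`. -/
def lieb (X Y : E n → E n) : E n → E n :=
  fun p => fderiv ℝ Y p (X p) - fderiv ℝ X p (Y p)

/-- The semispray `S = ∂/∂t + Σ yⁱ ∂/∂xⁱ − 2 Σ Gⁱ ∂/∂yⁱ` associated to `G`. -/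
def Ssp (G : E n → Fin n → ℝ) : E n → E n := fun p => (1, p.2.2, fun i => -(2 * G p i))

/-- Nonlinear connection coefficients `Nⁱⱼ = ∂Gⁱ/∂yʲ`. -/
def Nc (G : E n → Fin n → ℝ) (i j : Fin n) : E n → ℝ :=
  fun p => fderiv ℝ (fun q => G q i) p (pdy j)

/-- `Nⁱ₀ = 2Gⁱ − Σⱼ Nⁱⱼ yʲ`. -/
def N0c (G : E n → Fin n → ℝ) (i : Fin n) : E n → ℝ :=
  fun p => 2 * G p i - ∑ j, Nc G i j p * p.2.2 j

/-- The horizontal vector field `δ/δxⁱ = ∂/∂xⁱ − Σⱼ Nʲᵢ ∂/∂yʲ`. -/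
def ddx (G : E n → Fin n → ℝ) (i : Fin n) : E n → E n :=
  fun p => (0, Pi.single i 1, fun j => -(Nc G j i p))

/-- The contact 1-form `δxⁱ = dxⁱ − yⁱ dt`. -/
def dxi (i : Fin n) : E n → E n → ℝ := fun p w => w.2.1 i - p.2.2 i * w.1

/-- The 1-form `δyⁱ = dyⁱ + Σⱼ Nⁱⱼ dxʲ + Nⁱ₀ dt`. -/
def dyi (G : E n → Fin n → ℝ) (i : Fin n) : E n → E n → ℝ :=
  fun p w => w.2.2 i + (∑ j, Nc G i j p * w.2.1 j) + N0c G i p * w.1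

/-- The vertical endomorphism `J = Σᵢ ∂/∂yⁱ ⊗ δxⁱ`. -/
def Jv : E n → E n → E n := fun p w => ypart (fun i => dxi i p w)

/-- The horizontal projector `h = S ⊗ dt + Σᵢ δ/δxⁱ ⊗ δxⁱ`. -/
def hv (G : E n → Fin n → ℝ) : E n → E n → E n :=
  fun p w => w.1 • Ssp G p + ∑ i, dxi i p w • ddx G i p

/-- Jacobi endomorphism components `Rⁱⱼ = 2 ∂Gⁱ/∂xʲ − Σₖ Nⁱₖ Nᵏⱼ − S(Nⁱⱼ)`. -/
def Rjac (G : E n → Fin n → ℝ) (i j : Fin n) : E n → ℝ := fun p =>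
  2 * fderiv ℝ (fun q => G q i) p (pdx j) - (∑ k, Nc G i k p * Nc G k j p)
    - vfd (Ssp G) (Nc G i j) p

/-- Curvature components `Rⁱⱼₖ = (δ/δxᵏ)(Nⁱⱼ) − (δ/δxʲ)(Nⁱₖ)`. -/
def Rcur (G : E n → Fin n → ℝ) (i j k : Fin n) : E n → ℝ := fun p =>
  fderiv ℝ (Nc G i j) p (ddx G k p) - fderiv ℝ (Nc G i k) p (ddx G j p)

/-- The Jacobi endomorphism `Φ = Σᵢⱼ Rʲᵢ ∂/∂yʲ ⊗ δxⁱ`. -/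
def Phi (G : E n → Fin n → ℝ) : E n → E n → E n :=
  fun p w => ypart (fun j => ∑ i, Rjac G j i p * dxi i p w)

/-- The tensor `Ψ = Σᵢ δ/δxⁱ ⊗ δyⁱ − Σᵢⱼ Rʲᵢ ∂/∂yʲ ⊗ δxⁱ`. -/
def Psi (G : E n → Fin n → ℝ) : E n → E n → E n :=
  fun p w => (∑ i, dyi G i p w • ddx G i p) - Phi G p w

/-- Lie derivative of a 1-form `θ` along `X`, evaluated on a vector field `Y`:
`(L_Xθ)(Y) = X(θ(Y)) − θ([X,Y])`. -/
def lieD (X : E n → E n) (θ : E n → E n → ℝ) (Y : E n → E n) : E n → ℝ :=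
  fun p => fderiv ℝ (fun q => θ q (Y q)) p (X p) - θ p (lieb X Y p)

/-- Exterior derivative of a 1-form: `dθ(X,Y) = X(θ(Y)) − Y(θ(X)) − θ([X,Y])`. -/
def extD (θ : E n → E n → ℝ) (X Y : E n → E n) : E n → ℝ :=
  fun p => fderiv ℝ (fun q => θ q (Y q)) p (X p) - fderiv ℝ (fun q => θ q (X q)) p (Y p)
    - θ p (lieb X Y p)

/-- Exterior derivative of a 1-form given as an operator on vector fields. -/
def extDop (α : (E n → E n) → E n → ℝ) (X Y : E n → E n) : E n → ℝ :=
  fun p => fderiv ℝ (α Y) p (X p) - fderiv ℝ (α X) p (Y p) - α (lieb X Y) p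

/-- The semi-basic 1-form `θ₀ dt + Σᵢ θᵢ δxⁱ`. -/
def sbform (θ0 : E n → ℝ) (θc : Fin n → E n → ℝ) : E n → E n → ℝ :=
  fun p w => θ0 p * w.1 + ∑ i, θc i p * dxi i p w

/-- `d_Jθ(X,Y) = dθ(JX,Y) + dθ(X,JY)` for a semi-basic 1-form `θ`. -/
def dJf (θ : E n → E n → ℝ) (X Y : E n → E n) : E n → ℝ :=
  fun p => extD θ (fun q => Jv q (X q)) Y p + extD θ X (fun q => Jv q (Y q)) p

/-- `d_hθ(X,Y) = dθ(hX,Y) + dθ(X,hY) − dθ(X,Y)` for a semi-basic 1-form `θ`. -/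
def dhf (G : E n → Fin n → ℝ) (θ : E n → E n → ℝ) (X Y : E n → E n) : E n → ℝ :=
  fun p => extD θ (fun q => hv G q (X q)) Y p + extD θ X (fun q => hv G q (Y q)) p
    - extD θ X Y p

/-- `d_Φθ(X,Y) = dθ(ΦX,Y) + dθ(X,ΦY)` for a semi-basic 1-form `θ`. -/
def dPhif (G : E n → Fin n → ℝ) (θ : E n → E n → ℝ) (X Y : E n → E n) : E n → ℝ :=
  fun p => extD θ (fun q => Phi G q (X q)) Y p + extD θ X (fun q => Phi G q (Y q)) p

/-- Lie derivative of the 2-form `dθ` along a vector field `SS`: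
`(L_S dθ)(X,Y) = S(dθ(X,Y)) − dθ([S,X],Y) − dθ(X,[S,Y])`. -/
def lieD2 (SS : E n → E n) (θ : E n → E n → ℝ) (X Y : E n → E n) : E n → ℝ :=
  fun p => fderiv ℝ (extD θ X Y) p (SS p) - extD θ (lieb SS X) Y p - extD θ X (lieb SS Y) p

/-- `∇dθ = L_S(dθ) − i_Ψ(dθ)`. -/
def nabD (G : E n → Fin n → ℝ) (θ : E n → E n → ℝ) (X Y : E n → E n) : E n → ℝ :=
  fun p => lieD2 (Ssp G) θ X Y p
    - (extD θ (fun q => Psi G q (X q)) Y p + extD θ X (fun q => Psi G q (Y q)) p)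

/-- The dynamical covariant derivative of an `n`-tuple of functions:
`(∇f)ᵢ = S(fᵢ) − Σⱼ Nʲᵢ fⱼ`. -/
def covd (G : E n → Fin n → ℝ) (f : Fin n → E n → ℝ) : Fin n → E n → ℝ :=
  fun i p => vfd (Ssp G) (f i) p - ∑ j, Nc G j i p * f j p

/-!
The Frölicher–Nijenhuis bracket of two fields of endomorphisms `A, B` is tensorial: in
`[A,B](X,Y)` the derivatives of `X` and `Y` cancel, leaving
`(D_{AX}B)Y − (D_{AY}B)X + (D_{BX}A)Y − (D_{BY}A)X − A((D_XB)Y − (D_YB)X) − B((D_XA)Y − (D_YA)X)`.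
Write `J w = ∂/∂y (w_x − w_t y)` and `h = Id − ∂/∂y ⊗ δy` with `δy(w) = w_y + 2 w_t G + dG(J w)`.
Every derivative `D_u J`, `D_u h` is vertical, hence killed by `J` and `h`, and in the four
remaining terms everything cancels except `d²G(JX, JY) − d²G(JY, JX)`, which vanishes by
symmetry of the second derivative.
-/

def fnBracket (A B : E n → E n → E n) (X Y : E n → E n) (p : E n) : E n :=
  lieb (fun q => A q (X q)) (fun q => B q (Y q)) p
    + lieb (fun q => B q (X q)) (fun q => A q (Y q)) p
    + A p (B p (lieb X Y p)) + B p (A p (lieb X Y p))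
    - A p (lieb X (fun q => B q (Y q)) p) - A p (lieb (fun q => B q (X q)) Y p)
    - B p (lieb X (fun q => A q (Y q)) p) - B p (lieb (fun q => A q (X q)) Y p)

theorem fnBracket_clm {A B : E n → E n →L[ℝ] E n} {X Y : E n → E n} {p : E n}
    (hA : DifferentiableAt ℝ A p) (hB : DifferentiableAt ℝ B p)
    (hX : DifferentiableAt ℝ X p) (hY : DifferentiableAt ℝ Y p) :
    fnBracket (fun q => A q) (fun q => B q) X Y p
      = fderiv ℝ B p (A p (X p)) (Y p) - fderiv ℝ B p (A p (Y p)) (X p)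
        + fderiv ℝ A p (B p (X p)) (Y p) - fderiv ℝ A p (B p (Y p)) (X p)
        - A p (fderiv ℝ B p (X p) (Y p) - fderiv ℝ B p (Y p) (X p))
        - B p (fderiv ℝ A p (X p) (Y p) - fderiv ℝ A p (Y p) (X p)) := by
  simp only [fnBracket, lieb, fderiv_clm_apply hA hX, fderiv_clm_apply hA hY,
    fderiv_clm_apply hB hX, fderiv_clm_apply hB hY, add_apply,
    ContinuousLinearMap.comp_apply, ContinuousLinearMap.flip_apply, map_add, map_sub]
  abel

def tcoord : E n →L[ℝ] ℝ := ContinuousLinearMap.fst ℝ ℝ ((Fin n → ℝ) × (Fin n → ℝ))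

def xcoord : E n →L[ℝ] (Fin n → ℝ) :=
  (ContinuousLinearMap.fst ℝ (Fin n → ℝ) (Fin n → ℝ)).comp (ContinuousLinearMap.snd ℝ ℝ _)

def ycoord : E n →L[ℝ] (Fin n → ℝ) :=
  (ContinuousLinearMap.snd ℝ (Fin n → ℝ) (Fin n → ℝ)).comp (ContinuousLinearMap.snd ℝ ℝ _)

def ypartL : (Fin n → ℝ) →L[ℝ] E n :=
  (ContinuousLinearMap.inr ℝ ℝ _).comp (ContinuousLinearMap.inr ℝ (Fin n → ℝ) (Fin n → ℝ))

theorem tcoord_apply (w : E n) : tcoord w = w.1 := rfl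

theorem ycoord_apply (w : E n) : ycoord w = w.2.2 := rfl

theorem ypart_eq_sum (c : Fin n → ℝ) : ypart c = ∑ i, c i • pdy i := by
  ext <;> simp [ypart, pdy, Prod.fst_sum, Prod.snd_sum, Finset.sum_apply, Pi.single_apply]

theorem fderiv_ypart_apply {G : E n → Fin n → ℝ} {p : E n} (hG : DifferentiableAt ℝ G p)
    (c : Fin n → ℝ) (j : Fin n) : fderiv ℝ G p (ypart c) j = ∑ i, c i * Nc G j i p := by
  simp [ypart_eq_sum, Nc, fderiv_apply hG]

def JvL (p : E n) : E n →L[ℝ] E n :=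
  ypartL.comp xcoord - tcoord.smulRight (ypartL (ycoord p))

theorem JvL_apply (p w : E n) : JvL p w = Jv p w := by
  ext i <;> simp [JvL, Jv, ypart, ypartL, xcoord, tcoord, ycoord, dxi, mul_comm]

theorem JvL_ypartL (p : E n) (c : Fin n → ℝ) : JvL p (ypartL c) = 0 := by
  simp [JvL, ypartL, xcoord, tcoord]

theorem ypartL_JvL_snd_snd (p w : E n) : ypartL (JvL p w).2.2 = JvL p w := by
  simp [JvL, ypartL, xcoord, tcoord]

theorem hasFDerivAt_JvL (p : E n) :
    HasFDerivAt JvL (-(ContinuousLinearMap.smulRightL ℝ (E n) (E n) tcoord).comp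
      (ypartL.comp ycoord)) p :=
  ((ContinuousLinearMap.smulRightL ℝ (E n) (E n) tcoord).comp
    (ypartL.comp ycoord)).hasFDerivAt.const_sub (ypartL.comp xcoord)

theorem fderiv_JvL_apply (p u w : E n) : fderiv ℝ JvL p u w = -(w.1 • ypartL u.2.2) := by
  rw [(hasFDerivAt_JvL p).fderiv]; rfl

/-- The form `δy = dy + N dx + N₀ dt`, regrouped as `dy + 2G dt + dG ∘ J`. -/
def dyL (G : E n → Fin n → ℝ) (p : E n) : E n →L[ℝ] (Fin n → ℝ) :=
  ycoord + tcoord.smulRight ((2 : ℝ) • G p) + (fderiv ℝ G p).comp (JvL p)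

def hvL (G : E n → Fin n → ℝ) (p : E n) : E n →L[ℝ] E n :=
  ContinuousLinearMap.id ℝ (E n) - ypartL.comp (dyL G p)

theorem hvL_apply {G : E n → Fin n → ℝ} {p : E n} (hG : DifferentiableAt ℝ G p) (w : E n) :
    hvL G p w = hv G p w := by
  have hJ : JvL p w = ypart (fun i => dxi i p w) := JvL_apply p w
  ext j
  · simp [hvL, ypartL, hv, Ssp, ddx, Prod.fst_sum]
  · simp only [hvL, ypartL, sub_apply, ContinuousLinearMap.id_apply,
      ContinuousLinearMap.comp_apply, ContinuousLinearMap.inr_apply, Prod.snd_sub, Prod.fst_sub,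
      Pi.sub_apply, Pi.zero_apply, sub_zero, hv, Ssp, Prod.smul_mk, smul_eq_mul, mul_one, dxi, ddx,
      mul_zero, Prod.snd_add, Prod.snd_sum, Prod.fst_add, Prod.fst_sum, Pi.add_apply,
      Pi.smul_apply, Finset.sum_apply, Pi.single_apply, mul_ite, Finset.sum_ite_eq,
      Finset.mem_univ, ↓reduceIte]
    ring
  · simp only [hvL, ypartL, dyL, ycoord, tcoord, ContinuousLinearMap.comp_add, sub_apply,
      ContinuousLinearMap.id_apply, add_apply, ContinuousLinearMap.comp_apply,
      ContinuousLinearMap.coe_snd', ContinuousLinearMap.inr_apply,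
      ContinuousLinearMap.smulRight_apply, ContinuousLinearMap.coe_fst', map_smul, Prod.smul_mk,
      smul_eq_mul, mul_zero, smul_zero, Prod.mk_add_mk, add_zero, hJ, Prod.snd_sub, Pi.sub_apply,
      Pi.add_apply, Pi.smul_apply, fderiv_ypart_apply hG, hv, Ssp, mul_one, ddx, Prod.snd_add,
      Prod.snd_sum, mul_neg, Finset.sum_apply, Finset.sum_neg_distrib]
    ring

theorem hvL_ypartL (G : E n → Fin n → ℝ) (p : E n) (c : Fin n → ℝ) :
    hvL G p (ypartL c) = 0 := by
  simp only [hvL, dyL, sub_apply, add_apply,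
    ContinuousLinearMap.comp_apply, JvL_ypartL, map_zero, add_zero]
  simp [ycoord, tcoord, ypartL]

theorem hvL_apply_snd_snd (G : E n → Fin n → ℝ) (p w : E n) :
    (hvL G p w).2.2 = -((2 * w.1) • G p + fderiv ℝ G p (JvL p w)) := by
  simp only [hvL, ypartL, dyL, ycoord, tcoord, ContinuousLinearMap.comp_add, sub_apply,
    ContinuousLinearMap.id_apply, add_apply, ContinuousLinearMap.comp_apply,
    ContinuousLinearMap.coe_snd', ContinuousLinearMap.inr_apply,
    ContinuousLinearMap.smulRight_apply, ContinuousLinearMap.coe_fst', map_smul, Prod.smul_mk,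
    smul_eq_mul, mul_zero, smul_zero, Prod.mk_add_mk, add_zero, Prod.snd_sub]
  module

theorem differentiableAt_hvL {G : E n → Fin n → ℝ} {p : E n} (hG : DifferentiableAt ℝ G p)
    (hG' : DifferentiableAt ℝ (fderiv ℝ G) p) : DifferentiableAt ℝ (hvL G) p := by
  have hJ := (hasFDerivAt_JvL p).differentiableAt
  unfold hvL dyL
  fun_prop

theorem fderiv_hvL_apply {G : E n → Fin n → ℝ} {p : E n} (hG : DifferentiableAt ℝ G p)
    (hG' : DifferentiableAt ℝ (fderiv ℝ G) p) (u w : E n) :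
    fderiv ℝ (hvL G) p u w = -ypartL ((2 * w.1) • fderiv ℝ G p u
      + fderiv ℝ (fderiv ℝ G) p u (JvL p w) - w.1 • fderiv ℝ G p (ypartL u.2.2)) := by
  have hsmul : HasFDerivAt (fun q => tcoord.smulRight ((2 : ℝ) • G q))
      ((ContinuousLinearMap.smulRightL ℝ (E n) (Fin n → ℝ) tcoord).comp
        ((2 : ℝ) • fderiv ℝ G p)) p :=
    (ContinuousLinearMap.smulRightL ℝ (E n) (Fin n → ℝ) tcoord).hasFDerivAt.comp p
      (hG.hasFDerivAt.const_smul (2 : ℝ))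
  have hdyL := ((hasFDerivAt_const ycoord p).add hsmul).add
    (hG'.hasFDerivAt.clm_comp (hasFDerivAt_JvL p))
  have hhvL : HasFDerivAt (hvL G) _ p :=
    ((hasFDerivAt_const ypartL p).clm_comp hdyL).const_sub (ContinuousLinearMap.id ℝ (E n))
  rw [hhvL.fderiv]
  simp only [ContinuousLinearMap.comp_smulₛₗ, Real.ringHom_apply, zero_add,
    ContinuousLinearMap.comp_neg, ContinuousLinearMap.comp_add, Pi.add_apply, map_add,
    ContinuousLinearMap.comp_zero, add_zero, add_apply, neg_apply, ContinuousLinearMap.comp_apply,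
    ContinuousLinearMap.flip_apply, ContinuousLinearMap.compL_apply, ycoord_apply,
    ContinuousLinearMap.smulRightL_apply_apply, smul_apply, ContinuousLinearMap.smulRight_apply,
    tcoord_apply, map_smul, map_sub]
  module

theorem fnBracket_JvL_hvL {G : E n → Fin n → ℝ} {X Y : E n → E n} {p : E n}
    (hG : ContDiffAt ℝ 2 G p) (hX : DifferentiableAt ℝ X p) (hY : DifferentiableAt ℝ Y p) :
    fnBracket (fun q => JvL q) (fun q => hvL G q) X Y p = 0 := by
  have hG₁ : DifferentiableAt ℝ G p := hG.differentiableAt (by norm_num)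
  have hG₂ : DifferentiableAt ℝ (fderiv ℝ G) p :=
    (hG.fderiv_right (m := 1) (by norm_num)).differentiableAt (by norm_num)
  have hsymm : IsSymmSndFDerivAt ℝ G p := hG.isSymmSndFDerivAt (by simp)
  rw [fnBracket_clm (hasFDerivAt_JvL p).differentiableAt (differentiableAt_hvL hG₁ hG₂) hX hY]
  simp only [fderiv_JvL_apply, fderiv_hvL_apply hG₁ hG₂, map_neg, map_sub, map_add, map_smul,
    JvL_ypartL, hvL_ypartL, ypartL_JvL_snd_snd, hvL_apply_snd_snd]
  rw [hsymm.eq (JvL p (Y p)) (JvL p (X p))]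
  module

theorem stmt3_general (n : ℕ) (G : E n → Fin n → ℝ) (hG : Cinf G) :
    ∀ X Y : E n → E n, Cinf X → Cinf Y → ∀ p : E n,
      lieb (fun q => Jv q (X q)) (fun q => hv G q (Y q)) p
      + lieb (fun q => hv G q (X q)) (fun q => Jv q (Y q)) p
      + Jv p (hv G p (lieb X Y p)) + hv G p (Jv p (lieb X Y p))
      - Jv p (lieb X (fun q => hv G q (Y q)) p)
      - Jv p (lieb (fun q => hv G q (X q)) Y p)
      - hv G p (lieb X (fun q => Jv q (Y q)) p)
      - hv G p (lieb (fun q => Jv q (X q)) Y p) = 0 := by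
  intro X Y hX hY p
  have hG₂ : ContDiff ℝ 2 G := hG.of_le (WithTop.coe_le_coe.2 le_top)
  have hJv : (Jv : E n → E n → E n) = fun q => ⇑(JvL q) :=
    funext₂ fun q w => (JvL_apply q w).symm
  have hhv : hv G = fun q => ⇑(hvL G q) :=
    funext₂ fun q w => (hvL_apply (hG₂.differentiable (by norm_num) q) w).symm
  change fnBracket Jv (hv G) X Y p = 0
  rw [hJv, hhv]
  exact fnBracket_JvL_hvL hG₂.contDiffAt (hX.differentiable (by simp) p)
    (hY.differentiable (by simp) p)

/-- The weak torsion of the nonlinear connection induced by `S`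
vanishes: the Frölicher–Nijenhuis bracket `[J,h] = 0`, i.e. for all smooth vector
fields `X, Y`:
`[JX,hY] + [hX,JY] + (J∘h + h∘J)([X,Y]) − J([X,hY]) − J([hX,Y]) − h([X,JY]) − h([JX,Y]) = 0`. -/
theorem stmt3 (n : ℕ) (hn : 1 ≤ n) (G : E n → Fin n → ℝ) (hG : Cinf G) :
    ∀ X Y : E n → E n, Cinf X → Cinf Y → ∀ p : E n,
      lieb (fun q => Jv q (X q)) (fun q => hv G q (Y q)) p
      + lieb (fun q => hv G q (X q)) (fun q => Jv q (Y q)) p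
      + Jv p (hv G p (lieb X Y p)) + hv G p (Jv p (lieb X Y p))
      - Jv p (lieb X (fun q => hv G q (Y q)) p)
      - Jv p (lieb (fun q => hv G q (X q)) Y p)
      - hv G p (lieb X (fun q => Jv q (Y q)) p)
      - hv G p (lieb (fun q => Jv q (X q)) Y p) = 0 :=
  stmt3_general n G hG
end
end

section
/- The Jacobi endomorphism components and the curvature components satisfy, for all indices i, j, k: ∂R^k_j/∂y^i − ∂R^k_i/∂y^j = 3 R^k_{ij}. -/
noncomputable section

variable {n : ℕ}

/-! Differentiating `Rᵏⱼ` in `yⁱ`, the terms `S(∂Nᵏⱼ/∂yⁱ)` and `Nᵏₘ ∂Nᵐⱼ/∂yⁱ` are symmetric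
in `i, j`, since `∂Nᵏⱼ/∂yⁱ = ∂²Gᵏ/∂yⁱ∂yʲ`. The rest comes from `2 ∂Gᵏ/∂xʲ`, from
`(∂Nᵏₘ/∂yⁱ) Nᵐⱼ = Nᵐⱼ ∂Nᵏᵢ/∂yᵐ`, and from the commutator `[∂/∂yⁱ, S] = 2 δ/δxⁱ − ∂/∂xⁱ`:
`∂Rᵏⱼ/∂yⁱ ≡ ∂Nᵏᵢ/∂xʲ + δNᵏᵢ/δxʲ + ∂Nᵏⱼ/∂xⁱ − 2 δNᵏⱼ/δxⁱ` modulo symmetric terms.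
Antisymmetrizing, the `∂/∂x` terms cancel and the `δ/δx` terms add up to `3 Rᵏᵢⱼ`. -/

section SecondDerivative

variable {V F : Type*} [NormedAddCommGroup V] [NormedSpace ℝ V]
  [NormedAddCommGroup F] [NormedSpace ℝ F] {f : V → F} {p : V}

theorem fderiv_fderiv_apply_const (hf : DifferentiableAt ℝ (fderiv ℝ f) p) (v w : V) :
    fderiv ℝ (fun q => fderiv ℝ f q v) p w = fderiv ℝ (fderiv ℝ f) p w v := by
  simp [fderiv_clm_apply hf (differentiableAt_const v)]

theorem fderiv_fderiv_apply_field (hf : ContDiff ℝ 2 f) {X : V → V}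
    (hX : DifferentiableAt ℝ X p) (v : V) :
    fderiv ℝ (fun q => fderiv ℝ f q (X q)) p v
      = fderiv ℝ (fun q => fderiv ℝ f q v) p (X p) + fderiv ℝ f p (fderiv ℝ X p v) := by
  have hdf : DifferentiableAt ℝ (fderiv ℝ f) p :=
    (hf.fderiv_right (m := 1) le_rfl).differentiable one_ne_zero p
  rw [fderiv_clm_apply hdf hX, fderiv_fderiv_apply_const hdf,
    (hf.contDiffAt.isSymmSndFDerivAt (by simp)).eq]
  simp [add_comm]

theorem fderiv_fderiv_apply_const_comm (hf : ContDiff ℝ 2 f) (p v w : V) :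
    fderiv ℝ (fun q => fderiv ℝ f q v) p w = fderiv ℝ (fun q => fderiv ℝ f q w) p v := by
  simpa using fderiv_fderiv_apply_field hf (differentiableAt_const (c := v)) (p := p) w

theorem ContDiff.fderiv_apply_const {m k : WithTop ℕ∞} (hf : ContDiff ℝ k f) (hmk : m + 1 ≤ k)
    (v : V) :
    ContDiff ℝ m (fun q => fderiv ℝ f q v) :=
  (hf.fderiv_right hmk).clm_apply contDiff_const

end SecondDerivative

open scoped ContDiff

section Semispray

variable {G : E n → Fin n → ℝ}

theorem Cinf.contDiff_apply (hG : Cinf G) (k : Fin n) : ContDiff ℝ ∞ (fun q => G q k) :=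
  contDiff_pi.mp hG k

theorem Cinf.contDiff_Nc (hG : Cinf G) (k j : Fin n) : ContDiff ℝ ∞ (Nc G k j) :=
  (hG.contDiff_apply k).fderiv_apply_const (by simp) (pdy j)

theorem Cinf.contDiff_Ssp (hG : Cinf G) : ContDiff ℝ ∞ (Ssp G) := by
  have := hG.contDiff_apply
  unfold Ssp
  fun_prop

theorem ddx_eq_sub_sum (G : E n → Fin n → ℝ) (j : Fin n) (p : E n) :
    ddx G j p = pdx j - ∑ m, Nc G m j p • pdy m := by
  ext <;> simp [ddx, pdx, pdy, ypart, Prod.fst_sum, Prod.snd_sum, Finset.sum_apply,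
    Pi.single_apply]

theorem Cinf.fderiv_Ssp_pdy (hG : Cinf G) (i : Fin n) (p : E n) :
    fderiv ℝ (Ssp G) p (pdy i) = (2 : ℝ) • ddx G i p - pdx i := by
  have hdG : Differentiable ℝ G := hG.differentiable (by simp)
  have hy : HasFDerivAt ((-(2 : ℝ)) • G) ((-(2 : ℝ)) • fderiv ℝ G p) p :=
    (hdG p).hasFDerivAt.const_smul _
  have hSsp : Ssp G = fun q => ((1 : ℝ), q.2.2, ((-(2 : ℝ)) • G) q) := by
    funext q; ext <;> simp [Ssp]
  rw [hSsp, ((hasFDerivAt_const (1 : ℝ) p).prodMk (hasFDerivAt_snd.snd.prodMk hy)).fderiv]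
  ext k
  · simp [ddx, pdx]
  · simp [ddx, pdx, pdy, ypart]; ring
  · simp [ddx, pdx, pdy, ypart, Nc, fderiv_apply (hdG p)]

theorem Cinf.fderiv_Nc_pdy_comm (hG : Cinf G) (k i j : Fin n) (p : E n) :
    fderiv ℝ (Nc G k j) p (pdy i) = fderiv ℝ (Nc G k i) p (pdy j) :=
  fderiv_fderiv_apply_const_comm ((hG.contDiff_apply k).of_le ENat.LEInfty.out) p _ _

theorem Cinf.fderiv_Rjac_pdy (hG : Cinf G) (k i j : Fin n) (p : E n) :
    fderiv ℝ (Rjac G k j) p (pdy i)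
      = fderiv ℝ (Nc G k i) p (pdx j) + fderiv ℝ (Nc G k i) p (ddx G j p)
        + fderiv ℝ (Nc G k j) p (pdx i) - 2 * fderiv ℝ (Nc G k j) p (ddx G i p)
        - ∑ m, Nc G k m p * fderiv ℝ (Nc G m j) p (pdy i)
        - vfd (Ssp G) (fun q => fderiv ℝ (Nc G k j) q (pdy i)) p := by
  have hGk : ContDiff ℝ 2 (fun q => G q k) := (hG.contDiff_apply k).of_le ENat.LEInfty.out
  have hN : ∀ a b, ContDiff ℝ 2 (Nc G a b) := fun a b =>
    (hG.contDiff_Nc a b).of_le ENat.LEInfty.out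
  have dN : ∀ a b, DifferentiableAt ℝ (Nc G a b) p := fun a b =>
    (hN a b).differentiable two_ne_zero p
  have d1 : DifferentiableAt ℝ (fun q => fderiv ℝ (fun q' => G q' k) q (pdx j)) p :=
    (hGk.fderiv_apply_const (m := 1) le_rfl _).differentiable one_ne_zero p
  have d2 : DifferentiableAt ℝ (fun q => ∑ m, Nc G k m q * Nc G m j q) p :=
    DifferentiableAt.fun_sum fun m _ => (dN k m).mul (dN m j)
  have d3 : DifferentiableAt ℝ (vfd (Ssp G) (Nc G k j)) p :=
    (((hN k j).fderiv_right (m := 1) le_rfl).clm_apply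
      (hG.contDiff_Ssp.of_le ENat.LEInfty.out)).differentiable one_ne_zero p
  have hS : fderiv ℝ (vfd (Ssp G) (Nc G k j)) p (pdy i)
      = vfd (Ssp G) (fun q => fderiv ℝ (Nc G k j) q (pdy i)) p
        + 2 * fderiv ℝ (Nc G k j) p (ddx G i p) - fderiv ℝ (Nc G k j) p (pdx i) := by
    rw [show vfd (Ssp G) (Nc G k j) = fun q => fderiv ℝ (Nc G k j) q (Ssp G q) from rfl,
      fderiv_fderiv_apply_field (hN k j) ((hG.contDiff_Ssp.differentiable (by simp)) p),
      hG.fderiv_Ssp_pdy, map_sub, map_smul, smul_eq_mul, vfd]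
    ring
  have hsum : fderiv ℝ (fun q => ∑ m, Nc G k m q * Nc G m j q) p (pdy i)
      = fderiv ℝ (Nc G k i) p (pdx j) - fderiv ℝ (Nc G k i) p (ddx G j p)
        + ∑ m, Nc G k m p * fderiv ℝ (Nc G m j) p (pdy i) := by
    rw [fderiv_fun_sum (A := fun m q => Nc G k m q * Nc G m j q)
      fun m _ => (dN k m).fun_mul (dN m j), ddx_eq_sub_sum]
    simp only [sum_apply, fderiv_fun_mul (dN _ _) (dN _ _), add_apply, smul_apply, smul_eq_mul,
      map_sub, map_sum, map_smul, Finset.sum_add_distrib, hG.fderiv_Nc_pdy_comm k i]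
    ring
  have hx : fderiv ℝ (fun q => fderiv ℝ (fun q' => G q' k) q (pdx j)) p (pdy i)
      = fderiv ℝ (Nc G k i) p (pdx j) :=
    fderiv_fderiv_apply_const_comm hGk p _ _
  rw [show Rjac G k j = fun q => 2 * fderiv ℝ (fun q' => G q' k) q (pdx j)
      - ∑ m, Nc G k m q * Nc G m j q - vfd (Ssp G) (Nc G k j) q from rfl,
    fderiv_fun_sub (by fun_prop) d3, fderiv_fun_sub (by fun_prop) d2, fderiv_const_mul d1]
  simp only [sub_apply, smul_apply, smul_eq_mul]
  rw [hx, hsum, hS]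
  ring

end Semispray

theorem stmt6_general (n : ℕ) (G : E n → Fin n → ℝ) (hG : Cinf G) :
    ∀ (i j k : Fin n) (p : E n),
      fderiv ℝ (Rjac G k j) p (pdy i) - fderiv ℝ (Rjac G k i) p (pdy j)
        = 3 * Rcur G k i j p := by
  intro i j k p
  have hN : ∀ m, fderiv ℝ (Nc G m j) p (pdy i) = fderiv ℝ (Nc G m i) p (pdy j) :=
    fun m => hG.fderiv_Nc_pdy_comm m i j p
  have hS : (fun q => fderiv ℝ (Nc G k j) q (pdy i)) = fun q => fderiv ℝ (Nc G k i) q (pdy j) :=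
    funext fun q => hG.fderiv_Nc_pdy_comm k i j q
  rw [hG.fderiv_Rjac_pdy, hG.fderiv_Rjac_pdy, Rcur]
  simp only [hN, hS]
  ring

/-- The Jacobi endomorphism components and the curvature
components satisfy `∂Rᵏⱼ/∂yⁱ − ∂Rᵏᵢ/∂yʲ = 3 Rᵏᵢⱼ`. -/
theorem stmt6 (n : ℕ) (hn : 1 ≤ n) (G : E n → Fin n → ℝ) (hG : Cinf G) :
    ∀ (i j k : Fin n) (p : E n),
      fderiv ℝ (Rjac G k j) p (pdy i) - fderiv ℝ (Rjac G k i) p (pdy j)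
        = 3 * Rcur G k i j p :=
  stmt6_general n G hG
end
end

section
/- Let θ be a semi-basic 1-form on E. Then d_Jθ = 0 if and only if θ is the Poincaré–Cartan 1-form of a Lagrangian function, namely θ(X) = θ(S)·dt(X) + d(θ(S))(JX) for all vector fields X; in that case the Lagrangian is L = i_Sθ = θ(S) and θ = θ_L = L dt + dL∘J. -/
noncomputable section

variable {n : ℕ}

section Smooth

variable {α β : Type*} [NormedAddCommGroup α] [NormedSpace ℝ α]
  [NormedAddCommGroup β] [NormedSpace ℝ β] {f : α → β}

lemma Cinf.differentiable (hf : Cinf f) :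
    Differentiable ℝ f :=
  ContDiff.differentiable hf (by simp)

lemma Cinf.differentiable_fderiv (hf : Cinf f) :
    Differentiable ℝ (fderiv ℝ f) :=
  (ContDiff.fderiv_right hf (m := (⊤ : ℕ∞)) (by simp)).differentiable (by simp)

lemma Cinf.isSymmSndFDerivAt (hf : Cinf f) (p : α) :
    IsSymmSndFDerivAt ℝ f p :=
  ContDiffAt.isSymmSndFDerivAt (ContDiff.contDiffAt hf)
    (by simp only [minSmoothness_of_isRCLikeNormedField]; exact WithTop.coe_le_coe.mpr le_top)

end Smooth

namespace PoincareCartan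

lemma extD_eq_fderiv_sub {Θ : E n → E n →L[ℝ] ℝ} {X Y : E n → E n} {p : E n}
    (hΘ : DifferentiableAt ℝ Θ p) (hX : DifferentiableAt ℝ X p) (hY : DifferentiableAt ℝ Y p) :
    extD (fun q w => Θ q w) X Y p
      = fderiv ℝ (fun q => Θ q (Y p)) p (X p) - fderiv ℝ (fun q => Θ q (X p)) p (Y p) := by
  have leibniz : ∀ {Z : E n → E n}, DifferentiableAt ℝ Z p → ∀ v,
      fderiv ℝ (fun q => Θ q (Z q)) p v = Θ p (fderiv ℝ Z p v) + fderiv ℝ Θ p v (Z p) := by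
    intro Z hZ v
    rw [(hΘ.hasFDerivAt.clm_apply hZ.hasFDerivAt).fderiv]
    rfl
  have frozen : ∀ u v, fderiv ℝ (fun q => Θ q u) p v = fderiv ℝ Θ p v u := fun u v => by
    rw [leibniz (differentiableAt_const u)]; simp
  simp only [extD, lieb, leibniz hX, leibniz hY, frozen, map_sub]
  ring

lemma differentiable_Jv_comp {X : E n → E n} (hX : Differentiable ℝ X) :
    Differentiable ℝ (fun q => Jv q (X q)) := by
  unfold Jv ypart dxi
  fun_prop

lemma dxi_Jv (i : Fin n) (p w : E n) : dxi i p (Jv p w) = 0 := by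
  simp [dxi, Jv, ypart]

@[simp] lemma Jv_fst (p w : E n) : (Jv p w).1 = 0 := rfl

@[simp] lemma Jv_snd_snd (p w : E n) (i : Fin n) : (Jv p w).2.2 i = dxi i p w := rfl

lemma Jv_eq_sum (p w : E n) : Jv p w = ∑ i, dxi i p w • pdy i := by
  ext <;> simp [Jv, ypart, pdy, Prod.fst_sum, Prod.snd_sum, Pi.single_apply]

def dtL : E n →L[ℝ] ℝ := ContinuousLinearMap.fst ℝ ℝ _

def xL (i : Fin n) : E n →L[ℝ] ℝ :=
  (ContinuousLinearMap.proj i).comp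
    ((ContinuousLinearMap.fst ℝ _ _).comp (ContinuousLinearMap.snd ℝ ℝ _))

def yL (i : Fin n) : E n →L[ℝ] ℝ :=
  (ContinuousLinearMap.proj i).comp
    ((ContinuousLinearMap.snd ℝ _ _).comp (ContinuousLinearMap.snd ℝ ℝ _))

def sbformL (θ0 : E n → ℝ) (θc : Fin n → E n → ℝ) (p : E n) : E n →L[ℝ] ℝ :=
  θ0 p • dtL + ∑ i, θc i p • (xL i - p.2.2 i • dtL)

variable {θ0 : E n → ℝ} {θc : Fin n → E n → ℝ}

lemma sbformL_apply (p w : E n) : sbformL θ0 θc p w = sbform θ0 θc p w := by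
  simp [sbformL, sbform, dtL, xL, dxi]

lemma differentiable_sbformL (h0 : Differentiable ℝ θ0) (hc : ∀ i, Differentiable ℝ (θc i)) :
    Differentiable ℝ (sbformL θ0 θc) := by
  unfold sbformL
  fun_prop

lemma fderiv_sbform_apply (h0 : Differentiable ℝ θ0) (hc : ∀ i, Differentiable ℝ (θc i))
    (p a b : E n) :
    fderiv ℝ (fun q => sbform θ0 θc q b) p a
      = fderiv ℝ θ0 p a * b.1
        + ∑ i, (fderiv ℝ (θc i) p a * dxi i p b - θc i p * a.2.2 i * b.1) := by
  have hy : ∀ i, HasFDerivAt (fun q : E n => q.2.2 i) (yL i) p := fun i => (yL i).hasFDerivAt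
  have H := ((h0 p).hasFDerivAt.mul_const b.1).fun_add (HasFDerivAt.fun_sum (u := Finset.univ)
    fun i _ => (hc i p).hasFDerivAt.fun_mul (((hy i).mul_const b.1).const_sub (b.2.1 i)))
  rw [show (fun q => sbform θ0 θc q b) = fun q =>
    θ0 q * b.1 + ∑ i, θc i q * (b.2.1 i - q.2.2 i * b.1) from rfl, H.fderiv]
  simp only [add_apply, FunLike.coe_sum, Finset.sum_apply,
    smul_apply, neg_apply, smul_eq_mul]
  exact congrArg₂ (· + ·) (mul_comm _ _) (Finset.sum_congr rfl fun i _ => by simp [yL, dxi]; ring)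

/-- `(θ_L − θ)(w)` for the Lagrangian `L = θ₀`, where `θ_L = L dt + dL∘J`. -/
def pcDefect (θ0 : E n → ℝ) (θc : Fin n → E n → ℝ) (p w : E n) : ℝ :=
  fderiv ℝ θ0 p (Jv p w) - ∑ i, θc i p * dxi i p w

/-- Vanishes when `∂θᵢ/∂yʲ` is symmetric in `i, j`. -/
def vertCurl (θc : Fin n → E n → ℝ) (p a b : E n) : ℝ :=
  ∑ i, (fderiv ℝ (θc i) p (Jv p a) * dxi i p b - fderiv ℝ (θc i) p (Jv p b) * dxi i p a)

lemma dJf_sbform (h0 : Differentiable ℝ θ0) (hc : ∀ i, Differentiable ℝ (θc i))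
    {X Y : E n → E n} (hX : Differentiable ℝ X) (hY : Differentiable ℝ Y) (p : E n) :
    dJf (sbform θ0 θc) X Y p
      = pcDefect θ0 θc p (X p) * (Y p).1 - pcDefect θ0 θc p (Y p) * (X p).1
        + vertCurl θc p (X p) (Y p) := by
  have hΘ := differentiable_sbformL h0 hc p
  have hform : sbform θ0 θc = fun q w => sbformL θ0 θc q w := by
    funext q w; exact (sbformL_apply q w).symm
  rw [dJf, hform, extD_eq_fderiv_sub hΘ (differentiable_Jv_comp hX p) (hY p),
    extD_eq_fderiv_sub hΘ (hX p) (differentiable_Jv_comp hY p)]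
  simp only [sbformL_apply, fderiv_sbform_apply h0 hc, dxi_Jv, Jv_fst, Jv_snd_snd, mul_zero,
    sub_zero, Finset.sum_const_zero, pcDefect, vertCurl, Finset.sum_sub_distrib]
  rw [← Finset.sum_mul, ← Finset.sum_mul]
  ring

lemma fderiv_partial_y {f : E n → ℝ} (hf : Cinf f) (p u : E n) (i : Fin n) :
    fderiv ℝ (fun q => fderiv ℝ f q (pdy i)) p u = fderiv ℝ (fderiv ℝ f) p u (pdy i) := by
  rw [fderiv_clm_apply (hf.differentiable_fderiv p) (differentiableAt_const _)]
  simp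

lemma vertCurl_eq_zero (h0 : Cinf θ0) (hθ : ∀ i, θc i = fun q => fderiv ℝ θ0 q (pdy i))
    (p a b : E n) : vertCurl θc p a b = 0 := by
  have contract : ∀ u w : E n, ∑ i, fderiv ℝ (θc i) p u * dxi i p w
      = fderiv ℝ (fderiv ℝ θ0) p u (Jv p w) := fun u w => by
    simp only [hθ, fderiv_partial_y h0, Jv_eq_sum, map_sum, map_smul, smul_eq_mul, mul_comm]
  rw [vertCurl, Finset.sum_sub_distrib, contract, contract,
    h0.isSymmSndFDerivAt p (Jv p a) (Jv p b), sub_self]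

lemma sbform_Ssp (G : E n → Fin n → ℝ) (p : E n) : sbform θ0 θc p (Ssp G p) = θ0 p := by
  simp [sbform, Ssp, dxi]

lemma sbform_eq_iff_pcDefect_eq_zero (p w : E n) :
    sbform θ0 θc p w = θ0 p * w.1 + fderiv ℝ θ0 p (Jv p w) ↔ pcDefect θ0 θc p w = 0 := by
  unfold sbform pcDefect
  constructor <;> intro h <;> linarith

lemma pcDefect_eq_dJf (h0 : Differentiable ℝ θ0) (hc : ∀ i, Differentiable ℝ (θc i))
    (p w : E n) :
    pcDefect θ0 θc p w = dJf (sbform θ0 θc) (fun _ => w) (fun _ => ((1 : ℝ), p.2.2, 0)) p := by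
  have hJ : Jv p ((1 : ℝ), p.2.2, 0) = 0 := by ext <;> simp [Jv, ypart, dxi]
  have hdx : ∀ i, dxi i p ((1 : ℝ), p.2.2, 0) = 0 := fun i => by simp [dxi]
  rw [dJf_sbform h0 hc (differentiable_const _) (differentiable_const _)]
  simp [pcDefect, vertCurl, hJ, hdx]

lemma eq_fderiv_pdy_of_pcDefect_eq_zero (hL : ∀ p w, pcDefect θ0 θc p w = 0) (i : Fin n) :
    θc i = fun q => fderiv ℝ θ0 q (pdy i) := by
  funext q
  have h := hL q (pdx i)
  have hJ : Jv q (pdx i) = pdy i := by ext <;> simp [Jv, ypart, pdy, pdx, dxi]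
  rw [pcDefect, hJ] at h
  simp [dxi, pdx, Pi.single_apply] at h
  linarith

end PoincareCartan

open PoincareCartan in
theorem stmt10_general (n : ℕ) (G : E n → Fin n → ℝ)
    (θ0 : E n → ℝ) (θc : Fin n → E n → ℝ) (h0 : Cinf θ0) (hc : ∀ i, Cinf (θc i)) :
    (∀ X Y : E n → E n, Cinf X → Cinf Y → ∀ p : E n, dJf (sbform θ0 θc) X Y p = 0)
    ↔ (∀ (p : E n) (w : E n),
        sbform θ0 θc p w
          = sbform θ0 θc p (Ssp G p) * w.1
            + fderiv ℝ (fun q => sbform θ0 θc q (Ssp G q)) p (Jv p w)) := by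
  have hd0 : Differentiable ℝ θ0 := h0.differentiable
  have hdc : ∀ i, Differentiable ℝ (θc i) := fun i => (hc i).differentiable
  simp only [sbform_Ssp, sbform_eq_iff_pcDefect_eq_zero]
  constructor
  · intro hJ p w
    rw [pcDefect_eq_dJf hd0 hdc]
    exact hJ _ _ contDiff_const contDiff_const p
  · intro hL X Y hX hY p
    rw [dJf_sbform hd0 hdc hX.differentiable hY.differentiable, hL, hL,
      vertCurl_eq_zero h0 (eq_fderiv_pdy_of_pcDefect_eq_zero hL)]
    ring

/-- A semi-basic 1-form `θ = θ₀ dt + Σᵢ θᵢ δxⁱ` on `E` satisfies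
`d_Jθ = 0` if and only if it is the Poincaré–Cartan 1-form of a Lagrangian:
`θ(w) = θ(S)·dt(w) + d(θ(S))(Jw)` for all tangent vectors `w`; in that case the
Lagrangian is `L = i_Sθ = θ(S)` and `θ = θ_L = L dt + dL∘J`. -/
theorem stmt10 (n : ℕ) (hn : 1 ≤ n) (G : E n → Fin n → ℝ) (hG : Cinf G)
    (θ0 : E n → ℝ) (θc : Fin n → E n → ℝ) (h0 : Cinf θ0) (hc : ∀ i, Cinf (θc i)) :
    (∀ X Y : E n → E n, Cinf X → Cinf Y → ∀ p : E n, dJf (sbform θ0 θc) X Y p = 0)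
    ↔ (∀ (p : E n) (w : E n),
        sbform θ0 θc p w
          = sbform θ0 θc p (Ssp G p) * w.1
            + fderiv ℝ (fun q => sbform θ0 θc q (Ssp G q)) p (Jv p w)) :=
  stmt10_general n G θ0 θc h0 hc
end
end
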